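/- Let n ≥ 2 be even, s = s_n, a_{n+1} = (s^2 - s + 2)/4 and a_n = (s-2)a_{n+1} - (s-1), x = -1 + a_n + a_{n+1}, d = (s-1)x, and a_i = d/s_i for 0 ≤ i ≤ n-1. Then -d + (a_0 + ... + a_{n+1}) = 1. -/
import Mathlib

def sylvester : ℕ → ℕ
  | 0 => 2
  | n + 1 => sylvester n * (sylvester n - 1) + 1

lemma sylvester_ge_two (n : ℕ) : 2 ≤ sylvester n := by
  induction n with
  | zero => norm_num [sylvester]
  | succ n ih =>
    have : 1 ≤ sylvester n - 1 := by omega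
    simp only [sylvester]
    nlinarith

lemma sylvester_cast_succ (n : ℕ) :
    ((sylvester (n+1) : ℚ)) = (sylvester n : ℚ) * ((sylvester n : ℚ) - 1) + 1 := by
  have h := sylvester_ge_two n
  simp only [sylvester]
  push_cast [Nat.cast_sub (by omega : 1 ≤ sylvester n)]
  ring

lemma sylvester_sum (n : ℕ) :
    (∑ i ∈ Finset.range n, (1 : ℚ) / (sylvester i : ℚ)) = 1 - 1 / ((sylvester n : ℚ) - 1) := by
  induction n with
  | zero => norm_num [sylvester]
  | succ n ih =>
    have h2 := sylvester_ge_two n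
    have hs : (2 : ℚ) ≤ (sylvester n : ℚ) := by exact_mod_cast h2
    have hne : (sylvester n : ℚ) ≠ 0 := by linarith
    have hne1 : (sylvester n : ℚ) - 1 ≠ 0 := by intro h; nlinarith
    rw [Finset.sum_range_succ, ih, sylvester_cast_succ]
    field_simp
    ring

theorem fano_anticanonical_degree (n : ℕ) (hn : 2 ≤ n) (hne : Even n) :
    let s : ℚ := (sylvester n : ℚ)
    let aTop : ℚ := (s ^ 2 - s + 2) / 4
    let aN : ℚ := (s - 2) * aTop - (s - 1)
    let x : ℚ := -1 + aN + aTop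
    let d : ℚ := (s - 1) * x
    (-d) + ((∑ i ∈ Finset.range n, d / (sylvester i : ℚ)) + aN + aTop) = 1 := by
  intro s aTop aN x d
  have h2 := sylvester_ge_two n
  have hs : (2 : ℚ) ≤ s := by show (2:ℚ) ≤ (sylvester n : ℚ); exact_mod_cast h2
  have hne1 : s - 1 ≠ 0 := by intro h; nlinarith
  have hsum : (∑ i ∈ Finset.range n, d / (sylvester i : ℚ)) = d * (1 - 1 / (s - 1)) := by
    rw [← sylvester_sum n, Finset.mul_sum]
    exact Finset.sum_congr rfl fun i _ => by ring
  rw [hsum]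
  show -d + (d * (1 - 1 / (s - 1)) + aN + aTop) = 1
  have hd : d = (s - 1) * x := rfl
  have hx : x = -1 + aN + aTop := rfl
  rw [hd, hx]
  field_simp
  ring
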